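/- arXiv:1205.4155 — 2 statements merged into one kernel-verified Lean document; each statement's English description precedes it below -/
import Mathlib

section
/- Let f be a continuous self-map of the Cantor space, Q a partition of the Cantor space into clopen sets, G a finite digraph in which every vertex has an outgoing edge, and φ a vertex-surjective digraph homomorphism from G onto Γ(f,Q). Then there exist a partition P refining Q with refinement map ν : P → Q, and a bijection ψ from P onto the vertex set of G with ν = φ ∘ ψ, and a continuous self-map g of the Cantor space such that ψ : Γ(g,P) → G is a digraph isomorphism; moreover if every vertex of G also has an incoming edge, g can be taken to be a homeomorphism. -/
noncomputable def cantorDist (σ τ : ℕ → Bool) : ℝ :=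
  letI := Classical.propDecidable (∃ n, σ n ≠ τ n)
  if h : ∃ n, σ n ≠ τ n then 1 / (Nat.find h + 1) else 0

def IsPartition (P : Finset (Set (ℕ → Bool))) : Prop :=
  (∀ a ∈ P, IsClopen a ∧ a.Nonempty) ∧
  (∀ a ∈ P, ∀ b ∈ P, a ≠ b → Disjoint a b) ∧
  ⋃₀ (P : Set (Set (ℕ → Bool))) = Set.univ

noncomputable def cantorDiam (A : Set (ℕ → Bool)) : ℝ :=
  sSup {r | ∃ σ ∈ A, ∃ τ ∈ A, r = cantorDist σ τ}

noncomputable def mesh (C : Set (Set (ℕ → Bool))) : ℝ :=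
  sSup (cantorDiam '' C)

def gammaEdge (f : (ℕ → Bool) → (ℕ → Bool)) (a b : Set (ℕ → Bool)) : Prop :=
  (f '' a ∩ b).Nonempty

def balloonEdge (s m : ℕ) (a b : Fin (s + m)) : Prop :=
  b.val = a.val + 1 ∨ (a.val = s + m - 1 ∧ b.val = s)

def dumbbellEdge (r s t : ℕ) (a b : Fin (r + s + t)) : Prop :=
  (b.val = a.val + 1 ∧ a.val + 1 ≠ r) ∨
  (a.val = r - 1 ∧ b.val = 0) ∨
  (a.val = 0 ∧ b.val = r) ∨
  (a.val = r + s + t - 1 ∧ b.val = r + s)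

/-!
Every nonempty clopen subset of the Cantor space depends on finitely many coordinates, so it is a
finite disjoint union of copies of the Cantor space and hence homeomorphic to it. Consequently a
nonempty clopen set maps onto any nonempty finite set by a locally constant map, and two locally
constant surjections onto the same finite set differ by a homeomorphism (glue homeomorphisms of
corresponding fibres). Splitting each cell of `Q` along the vertices over it gives `P`; splitting
the cell of `x` along the edges `x → y` and sending the piece of `x → y` into the cell of `y` gives
`g`. If every vertex also has an incoming edge, the cell of `y` can also be split along the edges
`x → y` into it; the homeomorphism carrying each piece of the first splitting onto the piece of the
same edge in the second realises the same graph.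
-/

open Function

def cantorSplit (n : ℕ) : (ℕ → Bool) ≃ₜ (Fin n → Bool) × (ℕ → Bool) :=
  (Homeomorph.piCongrLeft (finSumNatEquiv n)).symm.trans Homeomorph.sumArrowHomeomorphProdArrow

def cantorSumSelf : (ℕ → Bool) ⊕ (ℕ → Bool) ≃ₜ (ℕ → Bool) :=
  ((Homeomorph.uniqueProd Unit _).symm.sumCongr (Homeomorph.uniqueProd Unit _).symm).trans <|
    Homeomorph.sumProdDistrib.symm.trans <|
    ((Equiv.boolEquivPUnitSumPUnit.{0, 0}.symm.trans (Equiv.funUnique (Fin 1) Bool).symm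
      ).toHomeomorphOfDiscrete.prodCongr (Homeomorph.refl _)).trans (cantorSplit 1).symm

theorem nonempty_prod_cantor_homeomorph (ι : Type*) [TopologicalSpace ι] [DiscreteTopology ι]
    [Finite ι] [Nonempty ι] : Nonempty (ι × (ℕ → Bool) ≃ₜ (ℕ → Bool)) := by
  obtain ⟨n, ⟨e⟩⟩ := Finite.exists_equiv_fin ι
  obtain ⟨m, rfl⟩ : ∃ m, n = m + 1 :=
    Nat.exists_eq_add_one.2 (Fin.pos_iff_nonempty.2 e.symm.nonempty)
  suffices ∀ m, Nonempty (Fin (m + 1) × (ℕ → Bool) ≃ₜ (ℕ → Bool)) from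
    (this m).map (e.toHomeomorphOfDiscrete.prodCongr (Homeomorph.refl _)).trans
  intro m
  induction m with
  | zero => exact ⟨Homeomorph.uniqueProd (Fin 1) _⟩
  | succ m ih =>
    obtain ⟨e⟩ := ih
    exact ⟨(finSumFinEquiv.symm.toHomeomorphOfDiscrete.prodCongr (Homeomorph.refl _)).trans <|
      Homeomorph.sumProdDistrib.trans <|
      (e.sumCongr (Homeomorph.uniqueProd _ _)).trans cantorSumSelf⟩

/-- A Lebesgue number of the cover `{C, Cᶜ}`, for the metric `2 ^ -(first index of difference)`,
bounds the number of coordinates on which membership in `C` depends. -/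
theorem IsClopen.exists_eq_preimage_cantorSplit {C : Set (ℕ → Bool)} (hC : IsClopen C) :
    ∃ n, ∃ W : Set (Fin n → Bool), C = cantorSplit n ⁻¹' (W ×ˢ Set.univ) := by
  let := PiNat.metricSpace (E := fun _ : ℕ => Bool)
  obtain ⟨δ, hδ, hball⟩ := lebesgue_number_lemma_of_metric isCompact_univ
    (c := fun b : Bool => if b then C else Cᶜ)
    (by rintro (_ | _) <;> simp [hC.isOpen, hC.isClosed.isOpen_compl])
    (fun σ _ => by by_cases h : σ ∈ C <;> simp [h])
  obtain ⟨n, hn⟩ := exists_pow_lt_of_lt_one hδ one_half_lt_one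
  refine ⟨n, (fun σ => (cantorSplit n σ).1) '' C, Set.Subset.antisymm
    (fun σ hσ => ⟨Set.mem_image_of_mem _ hσ, trivial⟩) ?_⟩
  rintro τ ⟨⟨σ, hσ, hστ⟩, -⟩
  have hτσ : τ ∈ Metric.ball σ δ := by
    refine (PiNat.mem_cylinder_iff_dist_le.1 fun i hi => ?_).trans_lt hn
    exact (congrFun hστ ⟨i, hi⟩).symm
  obtain ⟨b, hb⟩ := hball σ trivial
  cases b
  · exact absurd (hb (Metric.mem_ball_self hδ)) (by simpa using hσ)
  · simpa using hb hτσ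

theorem IsClopen.nonempty_homeomorph_cantor {C : Set (ℕ → Bool)} (hC : IsClopen C)
    (hne : C.Nonempty) : Nonempty (C ≃ₜ (ℕ → Bool)) := by
  obtain ⟨n, W, rfl⟩ := hC.exists_eq_preimage_cantorSplit
  obtain ⟨σ, hσ⟩ := hne
  have : Nonempty W := ⟨⟨_, hσ.1⟩⟩
  obtain ⟨e⟩ := nonempty_prod_cantor_homeomorph W
  exact ⟨((cantorSplit n).subtype fun _ => Iff.rfl).trans <|
    (Homeomorph.Set.prod W Set.univ).trans <|
    ((Homeomorph.refl W).prodCongr (Homeomorph.Set.univ _)).trans e⟩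

theorem IsClopen.exists_isLocallyConstant_surjective {C : Set (ℕ → Bool)} (hC : IsClopen C)
    (hne : C.Nonempty) (ι : Type*) [Finite ι] [Nonempty ι] :
    ∃ u : C → ι, IsLocallyConstant u ∧ Surjective u := by
  let : TopologicalSpace ι := ⊥
  have : DiscreteTopology ι := ⟨rfl⟩
  obtain ⟨e⟩ := hC.nonempty_homeomorph_cantor hne
  obtain ⟨e'⟩ := nonempty_prod_cantor_homeomorph ι
  refine ⟨Prod.fst ∘ e'.symm ∘ e, ?_, Prod.fst_surjective.comp (e'.symm.surjective.comp e.surjective)⟩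
  exact (IsLocallyConstant.iff_continuous _).2
    (continuous_fst.comp (e'.symm.continuous.comp e.continuous))

section Fibers

variable {X Y ι : Type*} [TopologicalSpace X] [TopologicalSpace Y]

def IsLocallyConstant.sigmaFiberHomeomorph {s : X → ι} (hs : IsLocallyConstant s) :
    (Σ i, {x // s x = i}) ≃ₜ X :=
  (Equiv.sigmaFiberEquiv s).toHomeomorphOfContinuousOpen
    (continuous_sigma fun _ => continuous_subtype_val)
    (isOpenMap_sigma.2 fun i => (hs.isOpen_fiber i).isOpenMap_subtype_val)

def Homeomorph.sigmaCongrRight {A B : ι → Type*} [∀ i, TopologicalSpace (A i)]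
    [∀ i, TopologicalSpace (B i)] (e : ∀ i, A i ≃ₜ B i) : (Σ i, A i) ≃ₜ Σ i, B i where
  toEquiv := Equiv.sigmaCongrRight fun i => (e i).toEquiv
  continuous_toFun := continuous_sigma fun i => continuous_sigmaMk.comp (e i).continuous
  continuous_invFun := continuous_sigma fun i => continuous_sigmaMk.comp (e i).symm.continuous

theorem IsLocallyConstant.exists_homeomorph_of_fiberwise {s : X → ι} {t : Y → ι}
    (hs : IsLocallyConstant s) (ht : IsLocallyConstant t)
    (e : ∀ i, {x // s x = i} ≃ₜ {y // t y = i}) : ∃ h : X ≃ₜ Y, ∀ x, t (h x) = s x :=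
  ⟨hs.sigmaFiberHomeomorph.symm.trans <|
      (Homeomorph.sigmaCongrRight e).trans ht.sigmaFiberHomeomorph,
    fun x => (e (s x) ⟨x, rfl⟩).2⟩

end Fibers

theorem exists_homeomorph_comp_eq {ι : Type*} {s t : (ℕ → Bool) → ι}
    (hs : IsLocallyConstant s) (hss : Surjective s) (ht : IsLocallyConstant t)
    (hts : Surjective t) : ∃ h : (ℕ → Bool) ≃ₜ (ℕ → Bool), ∀ σ, t (h σ) = s σ := by
  have fiber_homeomorph {u : (ℕ → Bool) → ι} (hu : IsLocallyConstant u) (hus : Surjective u)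
      (i : ι) : {σ // u σ = i} ≃ₜ (ℕ → Bool) :=
    ((hu.isClopen_fiber i).nonempty_homeomorph_cantor (hus i)).some
  exact hs.exists_homeomorph_of_fiberwise ht fun i =>
    (fiber_homeomorph hs hss i).trans (fiber_homeomorph ht hts i).symm

theorem exists_isLocallyConstant_lift {Q V : Type*} [Finite V] {q : (ℕ → Bool) → Q}
    (hq : IsLocallyConstant q) (hqs : Surjective q) {φ : V → Q} (hφ : Surjective φ) :
    ∃ π : (ℕ → Bool) → V, IsLocallyConstant π ∧ Surjective π ∧ ∀ σ, φ (π σ) = q σ := by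
  have (a : Q) : ∃ u : {σ // q σ = a} → {x // φ x = a}, IsLocallyConstant u ∧ Surjective u :=
    have : Nonempty {x // φ x = a} := nonempty_subtype.2 (hφ a)
    (hq.isClopen_fiber a).exists_isLocallyConstant_surjective (hqs a) _
  choose u hu hus using this
  let π σ := (u (q σ) ⟨σ, rfl⟩).val
  have hπ (a : Q) (σ : {σ // q σ = a}) : π σ = u a σ := by
    obtain ⟨σ, rfl⟩ := σ
    rfl
  refine ⟨π, ?_, fun x => ?_, fun σ => (u (q σ) ⟨σ, rfl⟩).2⟩
  · have : IsLocallyConstant fun p : Σ a, {σ // q σ = a} => (u p.1 p.2).val :=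
      fun S => isOpen_sigma_iff.2 fun a => (hu a).comp Subtype.val S
    exact this.comp_continuous hq.sigmaFiberHomeomorph.symm.continuous
  · obtain ⟨σ, hσ⟩ := hus (φ x) ⟨x, rfl⟩
    exact ⟨σ, (hπ _ σ).trans (congrArg Subtype.val hσ)⟩

theorem IsPartition.exists_isLocallyConstant_index {Q : Finset (Set (ℕ → Bool))}
    (hQ : IsPartition Q) : ∃ q : (ℕ → Bool) → {a // a ∈ Q},
      IsLocallyConstant q ∧ Surjective q ∧ ∀ σ a, q σ = a ↔ σ ∈ a.val := by
  obtain ⟨hclopen, hdisj, hcover⟩ := hQ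
  have (σ : ℕ → Bool) : ∃ a : {a // a ∈ Q}, σ ∈ a.val := by
    obtain ⟨a, ha, hσ⟩ := Set.mem_sUnion.1 (hcover.symm ▸ Set.mem_univ σ)
    exact ⟨⟨a, ha⟩, hσ⟩
  choose q hq using this
  have hq_iff (σ a) : q σ = a ↔ σ ∈ a.val := by
    refine ⟨fun h => h ▸ hq σ, fun hσ => Subtype.ext ?_⟩
    by_contra hne
    exact Set.disjoint_left.1 (hdisj _ (q σ).2 _ a.2 hne) (hq σ) hσ
  refine ⟨q, IsLocallyConstant.iff_isOpen_fiber.2 fun a => ?_, fun a => ?_, hq_iff⟩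
  · simpa [Set.preimage, hq_iff] using (hclopen a a.2).1.isOpen
  · obtain ⟨σ, hσ⟩ := (hclopen a a.2).2
    exact ⟨σ, (hq_iff σ a).2 hσ⟩

theorem exists_isPartition_fibers {V : Type*} [Fintype V] {π : (ℕ → Bool) → V}
    (hπ : IsLocallyConstant π) (hπs : Surjective π) :
    ∃ (P : Finset (Set (ℕ → Bool))) (ψ : {a // a ∈ P} ≃ V), IsPartition P ∧
      ∀ a, a.val = π ⁻¹' {ψ a} := by
  classical
  let fiber (x : V) : Set (ℕ → Bool) := π ⁻¹' {x}
  have hfiber : Injective fiber := fun x y h => by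
    obtain ⟨σ, rfl⟩ := hπs x
    have : σ ∈ fiber y := h ▸ Set.mem_preimage.2 rfl
    exact this
  let ψ : {a // a ∈ Finset.univ.image fiber} ≃ V :=
    ((Equiv.ofInjective fiber hfiber).trans (Equiv.subtypeEquivRight (by simp))).symm
  refine ⟨_, ψ, ⟨?_, ?_, ?_⟩, fun a => ?_⟩
  · simp only [Finset.mem_image, Finset.mem_univ, true_and, forall_exists_index,
      forall_apply_eq_imp_iff]
    exact fun x => ⟨hπ.isClopen_fiber x, hπs x⟩
  · simp only [Finset.mem_image, Finset.mem_univ, true_and]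
    rintro _ ⟨x, rfl⟩ _ ⟨y, rfl⟩ hne
    exact Set.disjoint_left.2 fun σ (hx : π σ = x) (hy : π σ = y) => hne (by rw [← hx, ← hy])
  · simpa using Set.eq_univ_of_forall fun σ => Set.mem_iUnion.2 ⟨π σ, rfl⟩
  · exact (Equiv.apply_ofInjective_symm hfiber ((Equiv.subtypeEquivRight _).symm a)).symm

theorem gammaEdge_preimage_iff {V : Type*} {E : V → V → Prop} {π : (ℕ → Bool) → V}
    {s : (ℕ → Bool) → Σ x, {y // E x y}} {g : (ℕ → Bool) → (ℕ → Bool)} (hs : Surjective s)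
    (hs_fst : ∀ σ, (s σ).1 = π σ) (hg : ∀ σ, π (g σ) = (s σ).2) (x y : V) :
    gammaEdge g (π ⁻¹' {x}) (π ⁻¹' {y}) ↔ E x y := by
  constructor
  · rintro ⟨_, ⟨σ, rfl, rfl⟩, hy : π (g σ) = y⟩
    rw [← hs_fst, ← hy, hg]
    exact (s σ).2.2
  · intro hxy
    obtain ⟨σ, hσ⟩ := hs ⟨x, y, hxy⟩
    refine ⟨g σ, ⟨σ, ?_, rfl⟩, ?_⟩
    · show π σ = x
      rw [← hs_fst, hσ]
    · show π (g σ) = y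
      rw [hg, hσ]

theorem approximation_refine_general {V : Type*} [Fintype V] (E : V → V → Prop)
    (hE : ∀ x : V, ∃ y : V, E x y)
    (Q : Finset (Set (ℕ → Bool))) (hQ : IsPartition Q)
    (φ : V → {a // a ∈ Q}) (hφsurj : Function.Surjective φ) :
    ∃ P : Finset (Set (ℕ → Bool)), IsPartition P ∧
      ∃ (ν : {a // a ∈ P} → {a // a ∈ Q}) (ψ : {a // a ∈ P} ≃ V),
        (∀ a : {a // a ∈ P}, a.val ⊆ (ν a).val) ∧
        (∀ a : {a // a ∈ P}, ν a = φ (ψ a)) ∧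
        (∃ g : (ℕ → Bool) → (ℕ → Bool), Continuous g ∧
          ∀ a b : {a // a ∈ P}, gammaEdge g a.val b.val ↔ E (ψ a) (ψ b)) ∧
        ((∀ x : V, ∃ y : V, E y x) → ∃ g : (ℕ → Bool) ≃ₜ (ℕ → Bool),
          ∀ a b : {a // a ∈ P}, gammaEdge (⇑g) a.val b.val ↔ E (ψ a) (ψ b)) := by
  obtain ⟨q, hq, hqs, hq_iff⟩ := hQ.exists_isLocallyConstant_index
  obtain ⟨π, hπ, hπs, hφπ⟩ := exists_isLocallyConstant_lift hq hqs hφsurj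
  obtain ⟨P, ψ, hP, hψ⟩ := exists_isPartition_fibers hπ hπs
  have hfst : Surjective (Sigma.fst : (Σ x, {y // E x y}) → V) := fun x =>
    let ⟨y, hxy⟩ := hE x; ⟨⟨x, y, hxy⟩, rfl⟩
  obtain ⟨s, hs, hss, hs_fst⟩ := exists_isLocallyConstant_lift hπ hπs hfst
  refine ⟨P, hP, fun a => φ (ψ a), ψ, fun a σ hσ => ?_, fun _ => rfl, ?_, fun hE_in => ?_⟩
  · rw [hψ a] at hσ
    rw [← hq_iff, ← hφπ, show π σ = ψ a from hσ]
  · refine ⟨fun σ => surjInv hπs (s σ).2, (hs.comp fun e => surjInv hπs e.2.val).continuous, fun a b => ?_⟩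
    rw [hψ a, hψ b]
    exact gammaEdge_preimage_iff hss hs_fst (fun σ => surjInv_eq hπs _) _ _
  · have hsnd : Surjective fun e : Σ x, {y // E x y} => e.2.val := fun y =>
      let ⟨x, hxy⟩ := hE_in y; ⟨⟨x, y, hxy⟩, rfl⟩
    obtain ⟨t, ht, hts, ht_snd⟩ := exists_isLocallyConstant_lift hπ hπs hsnd
    obtain ⟨h, hh⟩ := exists_homeomorph_comp_eq hs hss ht hts
    refine ⟨h, fun a b => ?_⟩
    rw [hψ a, hψ b]
    exact gammaEdge_preimage_iff hss hs_fst (fun σ => by rw [← ht_snd, hh]) _ _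

theorem approximation_refine {V : Type*} [Fintype V] (E : V → V → Prop)
    (hE : ∀ x : V, ∃ y : V, E x y)
    (f : (ℕ → Bool) → (ℕ → Bool)) (hf : Continuous f)
    (Q : Finset (Set (ℕ → Bool))) (hQ : IsPartition Q)
    (φ : V → {a // a ∈ Q}) (hφsurj : Function.Surjective φ)
    (hφhom : ∀ x y : V, E x y → gammaEdge f (φ x).val (φ y).val) :
    ∃ P : Finset (Set (ℕ → Bool)), IsPartition P ∧
      ∃ (ν : {a // a ∈ P} → {a // a ∈ Q}) (ψ : {a // a ∈ P} ≃ V),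
        (∀ a : {a // a ∈ P}, a.val ⊆ (ν a).val) ∧
        (∀ a : {a // a ∈ P}, ν a = φ (ψ a)) ∧
        (∃ g : (ℕ → Bool) → (ℕ → Bool), Continuous g ∧
          ∀ a b : {a // a ∈ P}, gammaEdge g a.val b.val ↔ E (ψ a) (ψ b)) ∧
        ((∀ x : V, ∃ y : V, E y x) → ∃ g : (ℕ → Bool) ≃ₜ (ℕ → Bool),
          ∀ a b : {a // a ∈ P}, gammaEdge (⇑g) a.val b.val ↔ E (ψ a) (ψ b)) :=
  approximation_refine_general E hE Q hQ φ hφsurj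
end

section
/- Let f and g be continuous self-maps of the Cantor space. Suppose there are decreasing null sequences of partitions (P_n) and (Q_n) of the Cantor space and digraph isomorphisms ν_n : Γ(f,P_n) → Γ(g,Q_n) such that both (ν_n) and (ν_n⁻¹) asymptotically commute with refinements. Then f and g are topologically conjugate. -/
/-!
The conjugacy sends `σ` to the limit of the sets `ν̃ₙ(Pₙ(σ))`. They decrease in `n` and are
nonempty, and asymptotic commutation makes them eventually agree on any prescribed initial segment,
so by compactness they converge (as small sets) to a point `h σ`; `h` is continuous because
`ν̃ₙ(Pₙ(σ))` is locally constant in `σ`. The same construction for `μ` gives `h'`, and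
`h' ∘ h = id`: eventually `νₘ(Pₘ(σ))` lies in the open cell `Qₙ(h σ)`, so
`Pₘ(σ) = μₘ(νₘ(Pₘ(σ))) ⊆ μ̃ₙ(Qₙ(h σ))`.
Finally, `Pₙ(σ) → Pₙ(f σ)` is an edge of `Γ(f, Pₙ)`, which yields `yₙ ∈ ν̃ₙ(Pₙ(σ))` with
`g yₙ ∈ ν̃ₙ(Pₙ(f σ))`; letting `n → ∞` gives `h (f σ) = g (h σ)` since `g` is continuous.
-/

open Filter Topology Set Function PiNat

theorem PiNat.nhds_hasBasis_cylinder {E : ℕ → Type*} [∀ n, TopologicalSpace (E n)]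
    [∀ n, DiscreteTopology (E n)] (x : ∀ n, E n) :
    (𝓝 x).HasBasis (fun _ : ℕ => True) (cylinder x) := by
  refine ⟨fun U => ?_⟩
  rw [(isTopologicalBasis_cylinders E).mem_nhds_iff]
  constructor
  · rintro ⟨_, ⟨y, k, rfl⟩, hx, hU⟩
    exact ⟨k, trivial, by rwa [mem_cylinder_iff_eq.1 hx]⟩
  · rintro ⟨k, -, hU⟩
    exact ⟨_, ⟨x, k, rfl⟩, self_mem_cylinder x k, hU⟩

theorem PiNat.exists_tendsto_smallSets {E : ℕ → Type*} [∀ n, TopologicalSpace (E n)]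
    [∀ n, DiscreteTopology (E n)] [CompactSpace (∀ n, E n)] {T : ℕ → Set (∀ n, E n)}
    (hanti : Antitone T) (hne : ∀ n, (T n).Nonempty)
    (hsmall : ∀ k, ∀ᶠ n in atTop, ∀ x ∈ T n, T n ⊆ cylinder x k) :
    ∃ x, Tendsto T atTop (𝓝 x).smallSets := by
  obtain ⟨x, hx⟩ := IsCompact.nonempty_iInter_of_sequence_nonempty_isCompact_isClosed
    (fun n => closure (T n)) (fun n => closure_mono (hanti n.le_succ)) (fun n => (hne n).closure)
    isClosed_closure.isCompact fun _ => isClosed_closure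
  rw [mem_iInter] at hx
  refine ⟨x, (nhds_hasBasis_cylinder x).smallSets.tendsto_right_iff.2 fun k _ => ?_⟩
  filter_upwards [hsmall k] with n hn
  obtain ⟨y, hyx, hyT⟩ :=
    mem_closure_iff.1 (hx n) _ (isOpen_cylinder E x k) (self_mem_cylinder x k)
  rw [← mem_cylinder_iff_eq.1 hyx]
  exact hn y hyT

theorem mem_closure_of_tendsto_smallSets {Y : Type*} [TopologicalSpace Y] {T : ℕ → Set Y} {y : Y}
    (hanti : Antitone T) (hne : ∀ n, (T n).Nonempty) (hlim : Tendsto T atTop (𝓝 y).smallSets)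
    (n : ℕ) : y ∈ closure (T n) :=
  mem_closure_of_tendsto (hlim.of_smallSets (Eventually.of_forall fun m => (hne m).some_mem))
    ((eventually_ge_atTop n).mono fun _ hm => hanti hm (hne _).some_mem)

theorem continuous_of_tendsto_smallSets {X Y : Type*} [TopologicalSpace X] [TopologicalSpace Y]
    [RegularSpace Y] {T : ℕ → X → Set Y} {h : X → Y} (hanti : ∀ x, Antitone (T · x))
    (hne : ∀ n x, (T n x).Nonempty) (hloc : ∀ n, IsLocallyConstant (T n))
    (hlim : ∀ x, Tendsto (T · x) atTop (𝓝 (h x)).smallSets) : Continuous h := by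
  refine continuous_iff_continuousAt.2 fun x =>
    (closed_nhds_basis (h x)).tendsto_right_iff.2 fun V ⟨hV, hVc⟩ => ?_
  obtain ⟨n, hn⟩ := (tendsto_smallSets_iff.1 (hlim x) V hV).exists
  filter_upwards [(hloc n).eventually_eq x] with x' hx'
  have hx'T := mem_closure_of_tendsto_smallSets (hanti x') (hne · x') (hlim x') n
  rw [hx'] at hx'T
  exact hVc.closure_subset_iff.2 hn hx'T

theorem cantorDist_le_one (σ τ : ℕ → Bool) : cantorDist σ τ ≤ 1 := by
  unfold cantorDist
  split_ifs
  · rw [div_le_one (by positivity)]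
    exact le_add_of_nonneg_left (Nat.cast_nonneg _)
  · exact zero_le_one

theorem mem_cylinder_of_cantorDist_lt {σ τ : ℕ → Bool} {k : ℕ}
    (h : cantorDist σ τ < 1 / ((k : ℝ) + 1)) : σ ∈ cylinder τ k := by
  intro i hik
  by_contra hne
  have hex : ∃ n, σ n ≠ τ n := ⟨i, hne⟩
  rw [cantorDist, dif_pos hex] at h
  have hfind : Nat.find hex < k := (Nat.find_min' hex hne).trans_lt hik
  have : 1 / ((k : ℝ) + 1) ≤ 1 / ((Nat.find hex : ℝ) + 1) :=
    one_div_le_one_div_of_le (by positivity)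
      ((add_le_add_iff_right 1).2 (by exact_mod_cast hfind.le))
  linarith

theorem cantorDist_le_cantorDiam {A : Set (ℕ → Bool)} {σ τ : ℕ → Bool}
    (hσ : σ ∈ A) (hτ : τ ∈ A) : cantorDist σ τ ≤ cantorDiam A :=
  le_csSup ⟨1, by rintro _ ⟨σ', -, τ', -, rfl⟩; exact cantorDist_le_one σ' τ'⟩ ⟨σ, hσ, τ, hτ, rfl⟩

theorem cantorDiam_le_one (A : Set (ℕ → Bool)) : cantorDiam A ≤ 1 :=
  Real.sSup_le (by rintro _ ⟨σ, -, τ, -, rfl⟩; exact cantorDist_le_one σ τ) zero_le_one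

theorem cantorDiam_le_mesh {C : Set (Set (ℕ → Bool))} {A : Set (ℕ → Bool)} (hA : A ∈ C) :
    cantorDiam A ≤ mesh C :=
  le_csSup ⟨1, by rintro _ ⟨B, -, rfl⟩; exact cantorDiam_le_one B⟩ (mem_image_of_mem _ hA)

theorem eventually_subset_cylinder_of_tendsto_mesh {C : ℕ → Set (Set (ℕ → Bool))}
    (hC : Tendsto (fun n => mesh (C n)) atTop (𝓝 0)) (k : ℕ) :
    ∀ᶠ n in atTop, ∀ A ∈ C n, ∀ x ∈ A, A ⊆ cylinder x k := by
  filter_upwards [hC.eventually (gt_mem_nhds (by positivity : (0 : ℝ) < 1 / ((k : ℝ) + 1)))]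
    with n hn A hA x hx y hy
  exact mem_cylinder_of_cantorDist_lt
    (((cantorDist_le_cantorDiam hy hx).trans (cantorDiam_le_mesh hA)).trans_lt hn)

noncomputable def cell {α : Type*} (P : Finset (Set α)) (x : α) : Set α :=
  Classical.epsilon fun a => a ∈ P ∧ x ∈ a

namespace IsPartition

variable {P : Finset (Set (ℕ → Bool))} (hP : IsPartition P) {a b : Set (ℕ → Bool)} {σ : ℕ → Bool}
include hP

theorem eq_of_mem_of_mem (ha : a ∈ P) (hb : b ∈ P) (hσa : σ ∈ a) (hσb : σ ∈ b) : a = b :=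
  by_contra fun hne => disjoint_left.1 (hP.2.1 a ha b hb hne) hσa hσb

theorem cell_mem_and_mem_cell (σ : ℕ → Bool) : cell P σ ∈ P ∧ σ ∈ cell P σ := by
  have hσ : σ ∈ ⋃₀ (P : Set (Set (ℕ → Bool))) := hP.2.2 ▸ mem_univ σ
  obtain ⟨a, ha, hσa⟩ := mem_sUnion.1 hσ
  exact Classical.epsilon_spec (p := fun a => a ∈ P ∧ σ ∈ a) ⟨a, ha, hσa⟩

theorem cell_mem (σ : ℕ → Bool) : cell P σ ∈ P := (hP.cell_mem_and_mem_cell σ).1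

theorem mem_cell (σ : ℕ → Bool) : σ ∈ cell P σ := (hP.cell_mem_and_mem_cell σ).2

theorem cell_eq (ha : a ∈ P) (hσ : σ ∈ a) : cell P σ = a :=
  hP.eq_of_mem_of_mem (hP.cell_mem σ) ha (hP.mem_cell σ) hσ

theorem cell_mem_nhds (σ : ℕ → Bool) : cell P σ ∈ 𝓝 σ :=
  ((hP.1 _ (hP.cell_mem σ)).1.isOpen).mem_nhds (hP.mem_cell σ)

theorem isLocallyConstant_cell : IsLocallyConstant (cell P) :=
  (IsLocallyConstant.iff_eventually_eq _).2 fun σ =>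
    mem_of_superset (hP.cell_mem_nhds σ) fun _ hτ => hP.cell_eq (hP.cell_mem σ) hτ

end IsPartition

theorem antitone_cell {P : ℕ → Finset (Set (ℕ → Bool))} (hP : ∀ n, IsPartition (P n))
    (hPdec : ∀ n, ∀ b ∈ P (n + 1), ∃ a ∈ P n, b ⊆ a) (σ : ℕ → Bool) :
    Antitone fun n => cell (P n) σ := by
  refine antitone_nat_of_succ_le fun n => ?_
  obtain ⟨a, ha, hsub⟩ := hPdec n _ ((hP (n + 1)).cell_mem σ)
  rwa [(hP n).cell_eq ha (hsub ((hP (n + 1)).mem_cell σ))]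

/-- The set `ν̃ₙ(a)` of the statement. -/
def refinementImage {α β : Type*} (P : ℕ → Finset (Set α)) (ν : ℕ → Set α → Set β) (n : ℕ)
    (a : Set α) : Set β :=
  ⋃ m, ⋃ _ : n ≤ m, ⋃ b ∈ {b | b ∈ P m ∧ b ⊆ a}, ν m b

section refinementImage

variable {α β : Type*} {P : ℕ → Finset (Set α)} {ν : ℕ → Set α → Set β}

theorem subset_refinementImage {n m : ℕ} {a b : Set α} (hnm : n ≤ m) (hb : b ∈ P m)
    (hba : b ⊆ a) : ν m b ⊆ refinementImage P ν n a :=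
  fun _ hy => mem_iUnion₂.2 ⟨m, hnm, mem_iUnion₂.2 ⟨b, ⟨hb, hba⟩, hy⟩⟩

theorem refinementImage_mono {n n' : ℕ} {a a' : Set α} (hn : n' ≤ n) (ha : a ⊆ a') :
    refinementImage P ν n a ⊆ refinementImage P ν n' a' :=
  iUnion_subset fun _ => iUnion_subset fun hm => iUnion₂_subset fun _ hb =>
    subset_refinementImage (hn.trans hm) hb.1 (hb.2.trans ha)

end refinementImage

/-- `ν̃ₙ(Pₙ(σ))`. -/
def cellImage {β : Type*} (P : ℕ → Finset (Set (ℕ → Bool))) (ν : ℕ → Set (ℕ → Bool) → Set β)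
    (n : ℕ) (σ : ℕ → Bool) : Set β :=
  refinementImage P ν n (cell (P n) σ)

section cellImage

variable {P Q : ℕ → Finset (Set (ℕ → Bool))} {ν : ℕ → Set (ℕ → Bool) → Set (ℕ → Bool)}
  (hP : ∀ n, IsPartition (P n))
include hP

theorem image_cell_subset_cellImage (n : ℕ) (σ : ℕ → Bool) :
    ν n (cell (P n) σ) ⊆ cellImage P ν n σ :=
  subset_refinementImage le_rfl ((hP n).cell_mem σ) subset_rfl

theorem cellImage_nonempty (hQ : ∀ n, IsPartition (Q n)) (hνmem : ∀ n, ∀ a ∈ P n, ν n a ∈ Q n)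
    (n : ℕ) (σ : ℕ → Bool) : (cellImage P ν n σ).Nonempty :=
  ((hQ n).1 _ (hνmem n _ ((hP n).cell_mem σ))).2.mono (image_cell_subset_cellImage hP n σ)

theorem antitone_cellImage (hPdec : ∀ n, ∀ b ∈ P (n + 1), ∃ a ∈ P n, b ⊆ a) (σ : ℕ → Bool) :
    Antitone (cellImage P ν · σ) :=
  fun _ _ hnm => refinementImage_mono hnm (antitone_cell hP hPdec σ hnm)

theorem isLocallyConstant_cellImage (n : ℕ) : IsLocallyConstant (cellImage P ν n) :=
  (hP n).isLocallyConstant_cell.comp (refinementImage P ν n)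

theorem eventually_cellImage_subset_cylinder
    (hνasym : Tendsto (fun n => mesh (refinementImage P ν n '' (P n : Set (Set (ℕ → Bool)))))
      atTop (𝓝 0)) (σ : ℕ → Bool) (k : ℕ) :
    ∀ᶠ n in atTop, ∀ x ∈ cellImage P ν n σ, cellImage P ν n σ ⊆ cylinder x k :=
  (eventually_subset_cylinder_of_tendsto_mesh hνasym k).mono fun n hn =>
    hn _ (mem_image_of_mem _ ((hP n).cell_mem σ))

theorem exists_continuous_tendsto_cellImage (hQ : ∀ n, IsPartition (Q n))
    (hPdec : ∀ n, ∀ b ∈ P (n + 1), ∃ a ∈ P n, b ⊆ a) (hνmem : ∀ n, ∀ a ∈ P n, ν n a ∈ Q n)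
    (hνasym : Tendsto (fun n => mesh (refinementImage P ν n '' (P n : Set (Set (ℕ → Bool)))))
      atTop (𝓝 0)) :
    ∃ h : (ℕ → Bool) → (ℕ → Bool), Continuous h ∧
      ∀ σ, Tendsto (cellImage P ν · σ) atTop (𝓝 (h σ)).smallSets := by
  choose h hh using fun σ => exists_tendsto_smallSets (antitone_cellImage hP hPdec σ)
    (cellImage_nonempty hP hQ hνmem · σ) (eventually_cellImage_subset_cylinder hP hνasym σ)
  exact ⟨h, continuous_of_tendsto_smallSets (antitone_cellImage hP hPdec)
    (cellImage_nonempty hP hQ hνmem) (isLocallyConstant_cellImage hP) hh, hh⟩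

theorem leftInverse_of_tendsto_cellImage (hQ : ∀ n, IsPartition (Q n))
    {μ : ℕ → Set (ℕ → Bool) → Set (ℕ → Bool)} (hνmem : ∀ n, ∀ a ∈ P n, ν n a ∈ Q n)
    (hνμ : ∀ n, ∀ a ∈ P n, μ n (ν n a) = a)
    {h h' : (ℕ → Bool) → (ℕ → Bool)}
    (hh : ∀ σ, Tendsto (cellImage P ν · σ) atTop (𝓝 (h σ)).smallSets)
    (hh' : ∀ τ, Tendsto (cellImage Q μ · τ) atTop (𝓝 (h' τ)).smallSets) :
    LeftInverse h' h := by
  intro σ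
  have hσ : ∀ n, σ ∈ cellImage Q μ n (h σ) := by
    intro n
    obtain ⟨m, hm, hnm⟩ := ((tendsto_smallSets_iff.1 (hh σ) _ ((hQ n).cell_mem_nhds (h σ))).and
      (eventually_ge_atTop n)).exists
    have hsub := subset_refinementImage (ν := μ) hnm (hνmem m _ ((hP m).cell_mem σ))
      ((image_cell_subset_cellImage hP m σ).trans hm)
    rw [hνμ m _ ((hP m).cell_mem σ)] at hsub
    exact hsub ((hP m).mem_cell σ)
  exact tendsto_nhds_unique ((hh' (h σ)).of_smallSets (Eventually.of_forall hσ)) tendsto_const_nhds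

theorem semiconj_of_tendsto_cellImage {f g : (ℕ → Bool) → (ℕ → Bool)} (hg : Continuous g)
    (hiso : ∀ n, ∀ a ∈ P n, ∀ b ∈ P n, (gammaEdge f a b ↔ gammaEdge g (ν n a) (ν n b)))
    {h : (ℕ → Bool) → (ℕ → Bool)}
    (hh : ∀ σ, Tendsto (cellImage P ν · σ) atTop (𝓝 (h σ)).smallSets) :
    Semiconj h f g := by
  intro σ
  have hedge : ∀ n, ∃ y ∈ cellImage P ν n σ, g y ∈ cellImage P ν n (f σ) := by
    intro n
    have hf : gammaEdge f (cell (P n) σ) (cell (P n) (f σ)) :=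
      ⟨f σ, mem_image_of_mem f ((hP n).mem_cell σ), (hP n).mem_cell (f σ)⟩
    obtain ⟨_, ⟨y, hy, rfl⟩, hgy⟩ := (hiso n _ ((hP n).cell_mem σ) _ ((hP n).cell_mem _)).1 hf
    exact ⟨y, image_cell_subset_cellImage hP n σ hy, image_cell_subset_cellImage hP n _ hgy⟩
  choose y hy hgy using hedge
  have hlim : Tendsto y atTop (𝓝 (h σ)) := (hh σ).of_smallSets (Eventually.of_forall hy)
  exact tendsto_nhds_unique ((hh (f σ)).of_smallSets (Eventually.of_forall hgy))
    ((hg.tendsto _).comp hlim)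

end cellImage

theorem conjugate_of_asymptotically_commuting_general
    (f g : (ℕ → Bool) → (ℕ → Bool)) (hg : Continuous g)
    (P Q : ℕ → Finset (Set (ℕ → Bool)))
    (hP : ∀ n, IsPartition (P n)) (hQ : ∀ n, IsPartition (Q n))
    (hPdec : ∀ n, ∀ b ∈ P (n + 1), ∃ a ∈ P n, b ⊆ a)
    (hQdec : ∀ n, ∀ b ∈ Q (n + 1), ∃ a ∈ Q n, b ⊆ a)
    (ν μ : ℕ → Set (ℕ → Bool) → Set (ℕ → Bool))
    (hνmem : ∀ n, ∀ a ∈ P n, ν n a ∈ Q n)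
    (hμmem : ∀ n, ∀ c ∈ Q n, μ n c ∈ P n)
    (hνμ : ∀ n, ∀ a ∈ P n, μ n (ν n a) = a)
    (hμν : ∀ n, ∀ c ∈ Q n, ν n (μ n c) = c)
    (hiso : ∀ n, ∀ a ∈ P n, ∀ b ∈ P n,
      (gammaEdge f a b ↔ gammaEdge g (ν n a) (ν n b)))
    (hνasym : Filter.Tendsto (fun n =>
      mesh ((fun a => ⋃ m, ⋃ _ : n ≤ m, ⋃ b ∈ {b | b ∈ P m ∧ b ⊆ a}, ν m b) ''
        (↑(P n) : Set (Set (ℕ → Bool))))) Filter.atTop (nhds 0))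
    (hμasym : Filter.Tendsto (fun n =>
      mesh ((fun c => ⋃ m, ⋃ _ : n ≤ m, ⋃ d ∈ {d | d ∈ Q m ∧ d ⊆ c}, μ m d) ''
        (↑(Q n) : Set (Set (ℕ → Bool))))) Filter.atTop (nhds 0)) :
    ∃ h : (ℕ → Bool) ≃ₜ (ℕ → Bool), ∀ σ, f σ = h.symm (g (h σ)) := by
  obtain ⟨h, hcont, hh⟩ := exists_continuous_tendsto_cellImage hP hQ hPdec hνmem hνasym
  obtain ⟨h', hcont', hh'⟩ := exists_continuous_tendsto_cellImage hQ hP hQdec hμmem hμasym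
  have hleft : LeftInverse h' h := leftInverse_of_tendsto_cellImage hP hQ hνmem hνμ hh hh'
  let e : (ℕ → Bool) ≃ₜ (ℕ → Bool) :=
    { toFun := h
      invFun := h'
      left_inv := hleft
      right_inv := leftInverse_of_tendsto_cellImage hQ hP hμmem hμν hh' hh
      continuous_toFun := hcont
      continuous_invFun := hcont' }
  refine ⟨e, fun σ => ?_⟩
  change f σ = h' (g (h σ))
  rw [← semiconj_of_tendsto_cellImage hP hg hiso hh σ, hleft]

theorem conjugate_of_asymptotically_commuting
    (f g : (ℕ → Bool) → (ℕ → Bool)) (hf : Continuous f) (hg : Continuous g)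
    (P Q : ℕ → Finset (Set (ℕ → Bool)))
    (hP : ∀ n, IsPartition (P n)) (hQ : ∀ n, IsPartition (Q n))
    (hPdec : ∀ n, ∀ b ∈ P (n + 1), ∃ a ∈ P n, b ⊆ a)
    (hQdec : ∀ n, ∀ b ∈ Q (n + 1), ∃ a ∈ Q n, b ⊆ a)
    (hPnull : Filter.Tendsto (fun n => mesh (↑(P n) : Set (Set (ℕ → Bool))))
      Filter.atTop (nhds 0))
    (hQnull : Filter.Tendsto (fun n => mesh (↑(Q n) : Set (Set (ℕ → Bool))))
      Filter.atTop (nhds 0))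
    (ν μ : ℕ → Set (ℕ → Bool) → Set (ℕ → Bool))
    (hνmem : ∀ n, ∀ a ∈ P n, ν n a ∈ Q n)
    (hμmem : ∀ n, ∀ c ∈ Q n, μ n c ∈ P n)
    (hνμ : ∀ n, ∀ a ∈ P n, μ n (ν n a) = a)
    (hμν : ∀ n, ∀ c ∈ Q n, ν n (μ n c) = c)
    (hiso : ∀ n, ∀ a ∈ P n, ∀ b ∈ P n,
      (gammaEdge f a b ↔ gammaEdge g (ν n a) (ν n b)))
    (hνasym : Filter.Tendsto (fun n =>
      mesh ((fun a => ⋃ m, ⋃ _ : n ≤ m, ⋃ b ∈ {b | b ∈ P m ∧ b ⊆ a}, ν m b) ''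
        (↑(P n) : Set (Set (ℕ → Bool))))) Filter.atTop (nhds 0))
    (hμasym : Filter.Tendsto (fun n =>
      mesh ((fun c => ⋃ m, ⋃ _ : n ≤ m, ⋃ d ∈ {d | d ∈ Q m ∧ d ⊆ c}, μ m d) ''
        (↑(Q n) : Set (Set (ℕ → Bool))))) Filter.atTop (nhds 0)) :
    ∃ h : (ℕ → Bool) ≃ₜ (ℕ → Bool), ∀ σ, f σ = h.symm (g (h σ)) :=
  conjugate_of_asymptotically_commuting_general f g hg P Q hP hQ hPdec hQdec ν μ hνmem hμmem hνμ hμν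
    hiso hνasym hμasym
end
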